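/- arXiv:math-ph/0411017 — 4 statements merged into one kernel-verified Lean document; each statement's English description precedes it below -/
import Mathlib

section
/- Let F_1,...,F_n : ℝ^{2n} → ℝ be smooth functions in involution, and define the complex n×n matrix M(z) by M_{αβ}(z) = ∂F_β/∂p_α(z) + i ∂F_β/∂q_α(z). Then for every z, the corank of the real differential dF(z) (i.e. n minus the dimension of the span of ∇F_1(z),...,∇F_n(z)) equals the corank of the complex matrix M(z). In particular, M(z) is invertible if and only if z is a regular point of F = (F_1,...,F_n). -/
open scoped BigOperators
open Sum

noncomputable section

/-- Phase space `ℝ^{2n}`: index `inl i` is the `q_i` (position) coordinate,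
`inr i` is the `p_i` (momentum) coordinate. -/
abbrev PS (n : ℕ) := (Fin n ⊕ Fin n) → ℝ

/-- Standard symplectic inner product `[z₁,z₂] = q₁·p₂ − p₁·q₂`. -/
def symp {n : ℕ} (u v : PS n) : ℝ :=
  (∑ i, u (inl i) * v (inr i)) - ∑ i, u (inr i) * v (inl i)

/-- Gradient of a function on phase space. -/
def grad {n : ℕ} (F : PS n → ℝ) (z : PS n) : PS n :=
  fun i => fderiv ℝ F z (Pi.single i 1)

/-- Standard Poisson bracket `{F,G} = ∇F·J·∇G`. -/
def poisson {n : ℕ} (F G : PS n → ℝ) (z : PS n) : ℝ :=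
  symp (grad F z) (grad G z)

/-- Standard symplectic matrix `J = [[0,I],[−I,0]]`. -/
def Jmat (n : ℕ) : Matrix (Fin n ⊕ Fin n) (Fin n ⊕ Fin n) ℝ :=
  Matrix.fromBlocks 0 1 (-1) 0

/-- Hamiltonian vector field `ξ = J·∇F`. -/
def ham {n : ℕ} (F : PS n → ℝ) (z : PS n) : PS n :=
  (Jmat n).mulVec (grad F z)

/-- Hessian matrix of second partial derivatives. -/
def hess {n : ℕ} (F : PS n → ℝ) (z : PS n) :
    Matrix (Fin n ⊕ Fin n) (Fin n ⊕ Fin n) ℝ :=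
  fun i j => fderiv ℝ (fun w => fderiv ℝ F w (Pi.single j 1)) z (Pi.single i 1)

/-- The complex matrix `M(z)`, with `M_{αβ} = ∂F_β/∂p_α + i ∂F_β/∂q_α`. -/
def Mcx {n : ℕ} (F : Fin n → PS n → ℝ) (z : PS n) : Matrix (Fin n) (Fin n) ℂ :=
  fun α β => (grad (F β) z (inr α) : ℂ) + Complex.I * (grad (F β) z (inl α) : ℂ)

/-- for smooth functions in involution, the corank of the real
differential `dF(z)` equals the corank of the complex matrix `M(z)`; in particular
`M(z)` is invertible iff `z` is a regular point. -/
theorem stmt1 {n : ℕ} (F : Fin n → PS n → ℝ)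
    (hF : ∀ α, ContDiff ℝ (⊤ : ℕ∞) (F α))
    (hinv : ∀ α β, ∀ z : PS n, poisson (F α) (F β) z = 0) :
    ∀ z : PS n,
      (n - (Mcx F z).rank =
        n - Module.finrank ℝ (Submodule.span ℝ (Set.range fun α => grad (F α) z))) ∧
      ((Mcx F z).rank =
        Module.finrank ℝ (Submodule.span ℝ (Set.range fun α => grad (F α) z))) ∧
      (IsUnit (Mcx F z).det ↔
        Module.finrank ℝ (Submodule.span ℝ (Set.range fun α => grad (F α) z)) = n) := by
  intro z
  classical
  open Matrix Module Submodule in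
  set M : Matrix (Fin n) (Fin n) ℂ := Mcx F z with hM
  set A : Matrix (Fin n ⊕ Fin n) (Fin n) ℝ := Matrix.of fun i β => grad (F β) z i with hA
  -- the key identity Mᴴ * M = (Aᵀ * A).map ofReal, using involution
  have hMM : Mᴴ * M = (Aᵀ * A).map (fun r : ℝ => (r : ℂ)) := by
    ext α β
    have hp : poisson (F α) (F β) z = 0 := hinv α β z
    have hp' : (∑ i, grad (F α) z (inr i) * grad (F β) z (inl i))
        = ∑ i, grad (F α) z (inl i) * grad (F β) z (inr i) := by
      have := hp
      unfold poisson symp at this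
      linarith
    simp only [Matrix.mul_apply, Matrix.conjTranspose_apply, Matrix.map_apply,
      Matrix.transpose_apply, hM, Mcx, hA, Matrix.of_apply]
    have e1 : ∀ γ : Fin n,
        star ((grad (F α) z (inr γ) : ℂ) + Complex.I * (grad (F α) z (inl γ) : ℂ)) *
          ((grad (F β) z (inr γ) : ℂ) + Complex.I * (grad (F β) z (inl γ) : ℂ))
        = ((grad (F α) z (inr γ) * grad (F β) z (inr γ)
            + grad (F α) z (inl γ) * grad (F β) z (inl γ) : ℝ) : ℂ)
          + Complex.I * ((grad (F α) z (inr γ) * grad (F β) z (inl γ)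
            - grad (F α) z (inl γ) * grad (F β) z (inr γ) : ℝ) : ℂ) := by
      intro γ
      refine Complex.ext ?_ ?_ <;>
        simp [Complex.mul_re, Complex.mul_im, Complex.add_re, Complex.add_im] <;> ring
    rw [Finset.sum_congr rfl (fun γ _ => e1 γ), Finset.sum_add_distrib, ← Finset.mul_sum,
      ← Complex.ofReal_sum, ← Complex.ofReal_sum]
    have him : (∑ γ, (grad (F α) z (inr γ) * grad (F β) z (inl γ)
        - grad (F α) z (inl γ) * grad (F β) z (inr γ))) = 0 := by
      unfold poisson symp at hp
      rw [Finset.sum_sub_distrib]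
      linarith
    rw [him]
    push_cast
    rw [Fintype.sum_sum_type]
    push_cast
    rw [Finset.sum_add_distrib]
    ring
  -- fact 1 : real kernel vectors give complex kernel vectors
  have fact1 : ∀ x : Fin n → ℝ, A.mulVec x = 0 →
      M.mulVec (fun j => (x j : ℂ)) = 0 := by
    intro x hx
    funext γ
    have h1 : ∑ β, A (inr γ) β * x β = 0 := congrFun hx (inr γ)
    have h2 : ∑ β, A (inl γ) β * x β = 0 := congrFun hx (inl γ)
    show ∑ β, M γ β * (x β : ℂ) = 0
    have : ∀ β, M γ β * (x β : ℂ)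
        = ((A (inr γ) β * x β : ℝ) : ℂ) + Complex.I * ((A (inl γ) β * x β : ℝ) : ℂ) := by
      intro β
      simp only [hM, Mcx, hA, Matrix.of_apply]
      push_cast
      ring
    rw [Finset.sum_congr rfl fun β _ => this β, Finset.sum_add_distrib, ← Finset.mul_sum,
      ← Complex.ofReal_sum, ← Complex.ofReal_sum, h1, h2]
    simp
  -- fact 2 : complex kernel vectors have real and imaginary parts in the real kernel
  have fact2 : ∀ c : Fin n → ℂ, M.mulVec c = 0 →
      A.mulVec (fun j => (c j).re) = 0 ∧ A.mulVec (fun j => (c j).im) = 0 := by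
    intro c hc
    have h0 : ((Aᵀ * A).map (fun r : ℝ => (r : ℂ))).mulVec c = 0 := by
      rw [← hMM, ← Matrix.mulVec_mulVec, hc, Matrix.mulVec_zero]
    have hS : ∀ (sel : ℂ → ℝ), (∀ (r : ℝ) (z' : ℂ), sel ((r : ℂ) * z') = r * sel z') → sel 0 = 0 →
        (∀ s : Finset (Fin n), ∀ f : Fin n → ℂ, sel (∑ i ∈ s, f i) = ∑ i ∈ s, sel (f i)) →
        (Aᵀ * A).mulVec (fun j => sel (c j)) = 0 := by
      intro sel hmul hzero hsum
      funext α
      have := congrFun h0 α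
      simp only [Matrix.mulVec, dotProduct, Matrix.map_apply, Pi.zero_apply] at this ⊢
      have := congrArg sel this
      rw [hsum, hzero] at this
      rw [← this]
      exact Finset.sum_congr rfl fun j _ => (hmul _ _).symm
    have hre := hS Complex.re (by intros; simp [Complex.mul_re]) rfl
      (fun s f => Complex.re_sum s f)
    have him := hS Complex.im (by intros; simp [Complex.mul_im]) rfl
      (fun s f => Complex.im_sum s f)
    constructor
    · have : (fun j => (c j).re) ∈ LinearMap.ker (Aᵀ * A).mulVecLin := by
        rw [LinearMap.mem_ker, Matrix.mulVecLin_apply]; exact hre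
      rw [Matrix.ker_mulVecLin_transpose_mul_self] at this
      simpa [Matrix.mulVecLin_apply] using this
    · have : (fun j => (c j).im) ∈ LinearMap.ker (Aᵀ * A).mulVecLin := by
        rw [LinearMap.mem_ker, Matrix.mulVecLin_apply]; exact him
      rw [Matrix.ker_mulVecLin_transpose_mul_self] at this
      simpa [Matrix.mulVecLin_apply] using this
  -- the kernels
  set K : Submodule ℝ (Fin n → ℝ) := LinearMap.ker A.mulVecLin with hK
  set L : Submodule ℂ (Fin n → ℂ) := LinearMap.ker M.mulVecLin with hL
  set k : ℕ := finrank ℝ K with hk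
  set b : Basis (Fin k) ℝ K := Module.finBasis ℝ K with hb
  set v : Fin k → (Fin n → ℝ) := fun i => (b i : Fin n → ℝ) with hv
  have hv_indep : LinearIndependent ℝ v :=
    b.linearIndependent.map' K.subtype (Submodule.ker_subtype K)
  have hv_span : span ℝ (Set.range v) = K := by
    have h1 : Set.range v = K.subtype '' (Set.range b) := by
      rw [← Set.range_comp]; rfl
    rw [h1, ← Submodule.map_span, b.span_eq, Submodule.map_top, Submodule.range_subtype]
  set cv : Fin k → (Fin n → ℂ) := fun i j => ((v i j : ℝ) : ℂ) with hcv
  have hcvL : ∀ i, cv i ∈ L := by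
    intro i
    have hvK : v i ∈ K := by rw [← hv_span]; exact subset_span (Set.mem_range_self i)
    rw [hL, LinearMap.mem_ker, Matrix.mulVecLin_apply]
    exact fact1 (v i) (by rwa [hK, LinearMap.mem_ker, Matrix.mulVecLin_apply] at hvK)
  have hKL : finrank ℂ L = k := by
    apply le_antisymm
    · -- L ≤ span ℂ (range cv)
      have hmemR : ∀ x : Fin n → ℝ, x ∈ K →
          (fun j => (x j : ℂ)) ∈ span ℂ (Set.range cv) := by
        intro x hxK
        rw [← hv_span] at hxK
        induction hxK using Submodule.span_induction with
        | mem y hy =>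
          obtain ⟨i, rfl⟩ := hy
          exact subset_span (Set.mem_range_self i)
        | zero =>
          simp only [Pi.zero_apply, Complex.ofReal_zero]
          exact (span ℂ (Set.range cv)).zero_mem
        | add y w _ _ hy hw =>
          have : (fun j => ((y + w) j : ℂ)) = (fun j => (y j : ℂ)) + fun j => (w j : ℂ) := by
            funext j; simp
          rw [this]; exact add_mem hy hw
        | smul r y _ hy =>
          have : (fun j => ((r • y) j : ℂ)) = (r : ℂ) • fun j => (y j : ℂ) := by
            funext j; simp
          rw [this]; exact smul_mem _ _ hy
      have hsub : L ≤ span ℂ (Set.range cv) := by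
        intro c hc
        rw [hL, LinearMap.mem_ker, Matrix.mulVecLin_apply] at hc
        obtain ⟨hre, him⟩ := fact2 c hc
        have h1 := hmemR _ (by rw [hK, LinearMap.mem_ker, Matrix.mulVecLin_apply]; exact hre)
        have h2 := hmemR _ (by rw [hK, LinearMap.mem_ker, Matrix.mulVecLin_apply]; exact him)
        have hdec : c = (fun j => (((c j).re : ℝ) : ℂ))
            + Complex.I • (fun j => (((c j).im : ℝ) : ℂ)) := by
          funext j
          simp [Complex.ext_iff]
        rw [hdec]
        exact add_mem h1 (smul_mem _ _ h2)
      calc finrank ℂ L ≤ finrank ℂ (span ℂ (Set.range cv)) := Submodule.finrank_mono hsub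
        _ ≤ Fintype.card (Fin k) := finrank_range_le_card cv
        _ = k := Fintype.card_fin k
    · -- linear independence of cv inside L
      have hcv_indep : LinearIndependent ℂ cv := by
        rw [Fintype.linearIndependent_iff]
        intro g hg i
        have hco : ∀ j, ∑ i', g i' * ((v i' j : ℝ) : ℂ) = 0 := by
          intro j
          have := congrFun hg j
          simpa [Finset.sum_apply] using this
        have hre : ∀ i', (g i').re = 0 := by
          have : ∀ j, ∑ i', (g i').re * v i' j = 0 := by
            intro j
            have := congrArg Complex.re (hco j)
            simpa [Complex.re_sum, Complex.mul_re] using this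
          exact Fintype.linearIndependent_iff.mp hv_indep (fun i' => (g i').re)
            (by funext j; simpa [Finset.sum_apply] using this j)
        have him : ∀ i', (g i').im = 0 := by
          have : ∀ j, ∑ i', (g i').im * v i' j = 0 := by
            intro j
            have := congrArg Complex.im (hco j)
            simpa [Complex.im_sum, Complex.mul_im] using this
          exact Fintype.linearIndependent_iff.mp hv_indep (fun i' => (g i').im)
            (by funext j; simpa [Finset.sum_apply] using this j)
        exact Complex.ext (hre i) (him i)
      have : LinearIndependent ℂ (fun i => (⟨cv i, hcvL i⟩ : L)) := by
        apply LinearIndependent.of_comp L.subtype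
        exact hcv_indep
      simpa using this.fintype_card_le_finrank
  -- rank-nullity on both sides
  have hrankM : M.rank + finrank ℂ L = n := by
    rw [Matrix.rank, hL]
    rw [LinearMap.finrank_range_add_finrank_ker M.mulVecLin, Module.finrank_fin_fun]
  have hrankA : A.rank + k = n := by
    rw [Matrix.rank, hk, hK]
    rw [LinearMap.finrank_range_add_finrank_ker A.mulVecLin, Module.finrank_fin_fun]
  have hrk : M.rank = A.rank := by omega
  have hAspan : A.rank = finrank ℝ (span ℝ (Set.range fun α => grad (F α) z)) := by
    rw [Matrix.rank_eq_finrank_span_cols]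
    have hAT : Aᵀ = Matrix.of (fun α => grad (F α) z) := by
      ext α i
      simp [hA, Matrix.transpose_apply]
    rw [show A.col = Aᵀ from rfl, hAT]
    rfl
  have main : M.rank = finrank ℝ (span ℝ (Set.range fun α => grad (F α) z)) :=
    hrk.trans hAspan
  refine ⟨by rw [main], main, ?_⟩
  have hdet : IsUnit M.det ↔ M.rank = n := by
    rw [← Matrix.isUnit_iff_isUnit_det, ← Matrix.mulVec_surjective_iff_isUnit]
    constructor
    · intro h
      rw [Matrix.rank]
      have : LinearMap.range M.mulVecLin = ⊤ := by
        rw [LinearMap.range_eq_top, Matrix.coe_mulVecLin]; exact h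
      rw [this, finrank_top, Module.finrank_fin_fun]
    · intro h
      have : LinearMap.range M.mulVecLin = ⊤ := by
        apply Submodule.eq_top_of_finrank_eq
        rw [Module.finrank_fin_fun]; exact h
      rw [← Matrix.coe_mulVecLin, ← LinearMap.range_eq_top]
      exact this
  rw [hdet, main]
end
end

section
/- Let F_1,...,F_n be smooth functions in involution on ℝ^{2n} and M(z) the complex matrix with M_{αβ} = ∂F_β/∂p_α + i ∂F_β/∂q_α. If a ∈ ℝ^n is nonzero and Σ_α a_α ∇F_α(z) = 0, then M(z)·a = 0. Conversely, if a ∈ ℝ^n is nonzero and M(z)·a = 0, then Σ_α a_α ∇F_α(z) = 0. -/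
open scoped BigOperators
open Sum

noncomputable section

lemma mulVec_Mcx_eq {n : ℕ} (F : Fin n → PS n → ℝ) (z : PS n) (a : Fin n → ℝ) (α : Fin n) :
    (Mcx F z).mulVec (fun α => (a α : ℂ)) α =
    ((∑ β, a β * grad (F β) z (inr α) : ℝ) : ℂ)
      + Complex.I * ((∑ β, a β * grad (F β) z (inl α) : ℝ) : ℂ) := by
  simp only [Matrix.mulVec, dotProduct, Mcx]
  push_cast
  rw [Finset.mul_sum, ← Finset.sum_add_distrib]
  exact Finset.sum_congr rfl fun β _ => by ring

/-- a nonzero real vector `a` is a linear relation among the gradients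
`∇F_α(z)` iff it is a right null vector of `M(z)`. -/
theorem stmt2 {n : ℕ} (F : Fin n → PS n → ℝ)
    (hF : ∀ α, ContDiff ℝ (⊤ : ℕ∞) (F α))
    (hinv : ∀ α β, ∀ z : PS n, poisson (F α) (F β) z = 0)
    (z : PS n) (a : Fin n → ℝ) (ha : a ≠ 0) :
    ((∑ α, a α • grad (F α) z = 0) →
      (Mcx F z).mulVec (fun α => (a α : ℂ)) = 0) ∧
    ((Mcx F z).mulVec (fun α => (a α : ℂ)) = 0 →
      ∑ α, a α • grad (F α) z = 0) := by
  constructor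
  · intro h
    funext α
    have hq := congrFun h (inl α)
    have hp := congrFun h (inr α)
    simp only [Finset.sum_apply, Pi.smul_apply, smul_eq_mul, Pi.zero_apply] at hq hp
    simp [mulVec_Mcx_eq, hq, hp]
  · intro h
    funext i
    have key : ∀ α, (∑ β, a β * grad (F β) z (inr α) = 0) ∧
        (∑ β, a β * grad (F β) z (inl α) = 0) := by
      intro α
      have hα := congrFun h α
      rw [mulVec_Mcx_eq] at hα
      have := Complex.ext_iff.mp hα
      constructor
      · simpa using this.1
      · simpa using this.2
    simp only [Finset.sum_apply, Pi.smul_apply, smul_eq_mul, Pi.zero_apply]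
    cases i with
    | inl i => exact (key i).2
    | inr i => exact (key i).1
end
end

section
/- Let F_1,...,F_n be smooth functions in involution on ℝ^{2n}, let M(z) be the matrix M_{αβ} = ∂F_β/∂p_α + i ∂F_β/∂q_α, and let a ∈ ℂ^n be a nonzero right null vector of M(z). Then Re(a) or Im(a) is a nonzero real right null vector of M(z). (Equivalently: the complex null space of M(z) is spanned by real vectors.) -/
open scoped BigOperators
open Sum

noncomputable section

open scoped Matrix

/-- A complex vector whose self-inner-product vanishes is zero. -/
lemma dot_star_self_zero {m : Type*} [Fintype m] (v : m → ℂ)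
    (h : dotProduct (star v) v = 0) : v = 0 := by
  have h1 : (↑(∑ i, Complex.normSq (v i)) : ℂ) = 0 := by
    rw [Complex.ofReal_sum]
    rw [dotProduct] at h
    simpa [Complex.normSq_eq_conj_mul_self] using h
  have h2 : ∑ i, Complex.normSq (v i) = 0 := by exact_mod_cast h1
  have h3 := (Finset.sum_eq_zero_iff_of_nonneg
    (fun i _ => Complex.normSq_nonneg (v i))).mp h2
  funext i
  exact Complex.normSq_eq_zero.mp (h3 i (Finset.mem_univ i))

/-- if `a ∈ ℂⁿ` is a nonzero right null vector of `M(z)`, then its real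
part or its imaginary part is a nonzero real right null vector of `M(z)`. -/
theorem stmt3 {n : ℕ} (F : Fin n → PS n → ℝ)
    (hF : ∀ α, ContDiff ℝ (⊤ : ℕ∞) (F α))
    (hinv : ∀ α β, ∀ z : PS n, poisson (F α) (F β) z = 0)
    (z : PS n) (a : Fin n → ℂ) (ha : a ≠ 0)
    (hnull : (Mcx F z).mulVec a = 0) :
    ((fun α => (a α).re) ≠ (0 : Fin n → ℝ) ∧
      (Mcx F z).mulVec (fun α => ((a α).re : ℂ)) = 0) ∨
    ((fun α => (a α).im) ≠ (0 : Fin n → ℝ) ∧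
      (Mcx F z).mulVec (fun α => ((a α).im : ℂ)) = 0) := by
  set M := Mcx F z with hM
  set N := Mᴴ * M with hNdef
  -- N is a real matrix (imaginary parts vanish), by involution
  have hNreal : ∀ α β, (N α β).im = 0 := by
    intro α β
    have hp := hinv α β z
    rw [poisson, symp] at hp
    have : (N α β).im =
        ∑ γ, (grad (F α) z (inr γ) * grad (F β) z (inl γ)
              - grad (F α) z (inl γ) * grad (F β) z (inr γ)) := by
      rw [hNdef, Matrix.mul_apply, Complex.im_sum]
      refine Finset.sum_congr rfl fun γ _ => ?_
      simp [Matrix.conjTranspose_apply, hM, Mcx, Complex.ext_iff, Complex.mul_im,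
        Complex.mul_re]
      ring
    rw [this, Finset.sum_sub_distrib]
    linarith [hp]
  have hNa : N.mulVec a = 0 := by
    rw [hNdef, ← Matrix.mulVec_mulVec, hnull, Matrix.mulVec_zero]
  -- real and imaginary parts of a are null vectors of N
  have hre : ∀ v : Fin n → ℂ, (∀ β, (v β).im = 0) → N.mulVec v = 0 →
      M.mulVec v = 0 := by
    intro v _ hv
    apply dot_star_self_zero
    have : dotProduct (star v) (N.mulVec v) = 0 := by rw [hv]; simp
    rw [hNdef, ← Matrix.mulVec_mulVec, Matrix.dotProduct_mulVec,
      ← Matrix.star_mulVec] at this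
    exact this
  have hNx : N.mulVec (fun β => ((a β).re : ℂ)) = 0 := by
    funext α
    have h0 := congrFun hNa α
    simp only [Matrix.mulVec, dotProduct, Pi.zero_apply] at h0 ⊢
    have hre0 := congrArg Complex.re h0
    rw [Complex.re_sum] at hre0
    simp only [Complex.zero_re] at hre0
    apply Complex.ext
    · rw [Complex.re_sum, Complex.zero_re, ← hre0]
      refine Finset.sum_congr rfl fun β _ => ?_
      simp [Complex.mul_re, hNreal α β]
    · rw [Complex.im_sum, Complex.zero_im]
      refine Finset.sum_eq_zero fun β _ => ?_
      simp [Complex.mul_im, hNreal α β]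
  have hNy : N.mulVec (fun β => ((a β).im : ℂ)) = 0 := by
    funext α
    have h0 := congrFun hNa α
    simp only [Matrix.mulVec, dotProduct, Pi.zero_apply] at h0 ⊢
    have him0 := congrArg Complex.im h0
    rw [Complex.im_sum] at him0
    simp only [Complex.zero_im] at him0
    apply Complex.ext
    · rw [Complex.re_sum, Complex.zero_re, ← him0]
      refine Finset.sum_congr rfl fun β _ => ?_
      simp [Complex.mul_re, Complex.mul_im, hNreal α β]
    · rw [Complex.im_sum, Complex.zero_im]
      refine Finset.sum_eq_zero fun β _ => ?_
      simp [Complex.mul_im, hNreal α β]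
  have hMx : M.mulVec (fun β => ((a β).re : ℂ)) = 0 :=
    hre _ (fun β => by simp) hNx
  have hMy : M.mulVec (fun β => ((a β).im : ℂ)) = 0 :=
    hre _ (fun β => by simp) hNy
  by_cases hx : (fun α => (a α).re) = (0 : Fin n → ℝ)
  · right
    refine ⟨?_, hMy⟩
    intro hy
    apply ha
    funext α
    have h1 := congrFun hx α
    have h2 := congrFun hy α
    simp only [Pi.zero_apply] at h1 h2
    exact Complex.ext h1 h2
  · exact Or.inl ⟨hx, hMx⟩
end
end

section
/- Let K be an infinitesimally symplectic 2n×2n matrix with τ := (1/2)Tr K² ≠ 0, and suppose there is an (n−1)-dimensional isotropic subspace λ with Kλ = 0. Then dim(im K²) = 2, dim(ker K²) = 2n−2, and ℝ^{2n} = ker K² ⊕ im K² is a decomposition into mutually skew-orthogonal symplectic subspaces. -/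
/-!
`K²` is self-adjoint for the symplectic form `ω`, so `ker K²` is the `ω`-orthogonal of `im K²`.
Since `im K ⊆ λ^ω` and `K` kills `λ ⊆ λ^ω`, `rank K² ≤ dim λ^ω - dim λ = 2`. If `ω` vanished on
`im K²` then `K⁴ = 0`, forcing `Tr K² = 0`; so `im K²` is a symplectic plane, and its
`ω`-orthogonal complement `ker K²` is symplectic as well.
-/

open scoped BigOperators
open Sum

noncomputable section

open Module LinearMap

theorem Submodule.finrank_map_add_finrank_le_of_le_ker {k V V' : Type*} [Field k]
    [AddCommGroup V] [Module k V] [AddCommGroup V'] [Module k V'] [FiniteDimensional k V]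
    (f : V →ₗ[k] V') {U W : Submodule k V} (hUW : U ≤ W) (hUf : U ≤ ker f) :
    finrank k (W.map f) + finrank k U ≤ finrank k W := by
  have hkerU : finrank k U ≤ finrank k (ker (f.domRestrict W)) := by
    rw [← (comapSubtypeEquivOfLe hUW).finrank_eq, ker_domRestrict]
    exact finrank_mono (comap_mono hUf)
  rw [← range_domRestrict, ← finrank_range_add_finrank_ker (f.domRestrict W)]
  exact Nat.add_le_add_left hkerU _

namespace LinearMap.BilinForm

variable {k V : Type*} [Field k] [AddCommGroup V] [Module k V] {B : LinearMap.BilinForm k V}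

theorem IsAlt.finrank_span_pair (hB : B.IsAlt) {x y : V} (hxy : B x y ≠ 0) :
    finrank k (Submodule.span k {x, y}) = 2 := by
  have hx : x ≠ 0 := by rintro rfl; simp at hxy
  have hli : LinearIndependent k ![x, y] := by
    rw [LinearIndependent.pair_iff' hx]
    rintro a rfl
    simp [hB.self_eq_zero] at hxy
  rw [← Matrix.range_cons_cons_empty x y ![], finrank_span_eq_card hli, Fintype.card_fin]

/-- In a plane `W = span {y, z}` with `B y z ≠ 0`, pairing `a • y + b • z` with `y` and `z`
recovers `b` and `a` up to the factor `B y z`. -/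
theorem IsAlt.restrict_nondegenerate_of_finrank_eq_two [FiniteDimensional k V] (hB : B.IsAlt)
    {W : Submodule k V} (hW : finrank k W = 2) {y z : V} (hy : y ∈ W) (hz : z ∈ W)
    (hyz : B y z ≠ 0) : (B.restrict W).Nondegenerate := by
  refine B.nondegenerate_restrict_of_disjoint_orthogonal hB.isRefl ?_
  rw [Submodule.disjoint_def]
  intro x hxW hx
  have hspan : Submodule.span k {y, z} = W :=
    Submodule.eq_of_le_of_finrank_le (by simp [Submodule.span_le, Set.insert_subset_iff, hy, hz])
      (by rw [hW, hB.finrank_span_pair hyz])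
  obtain ⟨a, b, rfl⟩ := Submodule.mem_span_pair.mp (hspan ▸ hxW)
  have hb : b * B y z = 0 := by simpa [hB.self_eq_zero] using hx y hy
  have ha : a * B z y = 0 := by simpa [hB.self_eq_zero] using hx z hz
  rw [← hB.neg_eq, mul_neg, neg_eq_zero] at ha
  simp [(mul_eq_zero.mp ha).resolve_right hyz, (mul_eq_zero.mp hb).resolve_right hyz]

theorem eq_zero_of_restrict_nondegenerate {W : Submodule k V} (hW : (B.restrict W).Nondegenerate)
    {u : V} (hu : u ∈ W) (h : ∀ v ∈ W, B u v = 0) : u = 0 :=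
  congrArg Subtype.val (hW.1 ⟨u, hu⟩ fun v => h v v.2)

theorem restrict_orthogonal_nondegenerate [FiniteDimensional k V] (hB : B.Nondegenerate)
    (hB₀ : B.IsRefl) {W : Submodule k V} (hW : (B.restrict W).Nondegenerate) :
    (B.restrict (B.orthogonal W)).Nondegenerate := by
  rw [restrict_nondegenerate_iff_isCompl_orthogonal hB₀, orthogonal_orthogonal hB hB₀]
  exact (isCompl_orthogonal_of_restrict_nondegenerate hB₀ hW).symm

theorem _root_.LinearMap.IsSkewAdjoint.isAdjointPair_mul_self {f : Module.End k V}
    (hf : IsSkewAdjoint B f) :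
    IsAdjointPair B B (f * f) (f * f) := fun u v => by
  simp only [Module.End.mul_apply, hf _ _, Pi.neg_apply, map_neg, neg_neg]

section SelfAdjoint

variable {L : Module.End k V}

theorem apply_eq_zero_of_mem_ker_of_mem_range (hL : IsAdjointPair B B L L) {u v : V}
    (hu : u ∈ ker L) (hv : v ∈ range L) : B u v = 0 := by
  obtain ⟨w, rfl⟩ := hv
  rw [← hL, mem_ker.mp hu, map_zero, LinearMap.zero_apply]

theorem orthogonal_range_eq_ker (hB : B.Nondegenerate) (hL : IsAdjointPair B B L L) :
    B.orthogonal (range L) = ker L := by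
  ext u
  simp only [mem_orthogonal_iff, mem_range, forall_exists_index, forall_apply_eq_imp_iff, mem_ker]
  exact ⟨fun h => hB.2 _ fun w => (hL w u) ▸ h w, fun h w => by rw [hL, h, map_zero]⟩

theorem mul_self_eq_zero_of_range_isotropic (hB : B.Nondegenerate) (hL : IsAdjointPair B B L L)
    (h : ∀ x ∈ range L, ∀ y ∈ range L, B x y = 0) : L * L = 0 := by
  ext v
  refine hB.2 _ fun u => ?_
  rw [Module.End.mul_apply, ← hL]
  exact h _ ⟨u, rfl⟩ _ ⟨v, rfl⟩

theorem exists_mem_range_apply_ne_zero_of_trace_ne_zero (hB : B.Nondegenerate)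
    (hL : IsAdjointPair B B L L) (htr : trace k V L ≠ 0) :
    ∃ x ∈ range L, ∃ y ∈ range L, B x y ≠ 0 := by
  by_contra! h
  have hnil : IsNilpotent L := ⟨2, by rw [sq, mul_self_eq_zero_of_range_isotropic hB hL h]⟩
  exact htr (isNilpotent_trace_of_isNilpotent hnil).eq_zero

variable [FiniteDimensional k V]

theorem isCompl_ker_range (hB : B.Nondegenerate) (hB₀ : B.IsRefl) (hL : IsAdjointPair B B L L)
    (hR : (B.restrict (range L)).Nondegenerate) : IsCompl (ker L) (range L) :=
  orthogonal_range_eq_ker hB hL ▸ (isCompl_orthogonal_of_restrict_nondegenerate hB₀ hR).symm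

theorem restrict_ker_nondegenerate (hB : B.Nondegenerate) (hB₀ : B.IsRefl)
    (hL : IsAdjointPair B B L L) (hR : (B.restrict (range L)).Nondegenerate) :
    (B.restrict (ker L)).Nondegenerate :=
  orthogonal_range_eq_ker hB hL ▸ restrict_orthogonal_nondegenerate hB hB₀ hR

theorem IsAlt.two_le_finrank_range_of_trace_ne_zero (hB₁ : B.IsAlt) (hB : B.Nondegenerate)
    (hL : IsAdjointPair B B L L) (htr : trace k V L ≠ 0) : 2 ≤ finrank k (range L) := by
  obtain ⟨x, hx, y, hy, hxy⟩ := exists_mem_range_apply_ne_zero_of_trace_ne_zero hB hL htr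
  rw [← hB₁.finrank_span_pair hxy]
  exact Submodule.finrank_mono
    (Submodule.span_le.mpr (Set.insert_subset_iff.mpr ⟨hx, Set.singleton_subset_iff.mpr hy⟩))

theorem IsAlt.restrict_range_nondegenerate_of_finrank_eq_two (hB₁ : B.IsAlt)
    (hB : B.Nondegenerate) (hL : IsAdjointPair B B L L) (htr : trace k V L ≠ 0)
    (hR : finrank k (range L) = 2) : (B.restrict (range L)).Nondegenerate := by
  obtain ⟨x, hx, y, hy, hxy⟩ := exists_mem_range_apply_ne_zero_of_trace_ne_zero hB hL htr
  exact hB₁.restrict_nondegenerate_of_finrank_eq_two hR hx hy hxy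

end SelfAdjoint

/-- `range f ⊆ Uᗮ` and `U ⊆ Uᗮ ∩ ker f`, so `f` maps the `(dim V - dim U)`-dimensional space
`Uᗮ` onto a space of dimension at most `dim V - 2 dim U`, which contains `range (f * f)`. -/
theorem finrank_range_mul_self_add_two_mul_le [FiniteDimensional k V] (hB : B.Nondegenerate)
    {f : Module.End k V} (hf : IsSkewAdjoint B f) {U : Submodule k V}
    (hU : ∀ x ∈ U, ∀ y ∈ U, B x y = 0) (hUf : U ≤ ker f) :
    finrank k (range (f * f)) + 2 * finrank k U ≤ finrank k V := by
  have hrange : range f ≤ B.orthogonal U := by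
    rintro _ ⟨w, rfl⟩ u hu
    have := hf u w
    rwa [hUf hu, map_zero, LinearMap.zero_apply, Pi.neg_apply, map_neg, zero_eq_neg] at this
  have hUU : U ≤ B.orthogonal U := fun x hx u hu => hU u hu x hx
  have hmap := Submodule.finrank_map_add_finrank_le_of_le_ker f hUU hUf
  have hsq : finrank k (range (f * f)) ≤ finrank k ((B.orthogonal U).map f) := by
    rw [Module.End.mul_eq_comp, range_comp]
    exact Submodule.finrank_mono (Submodule.map_mono hrange)
  rw [finrank_orthogonal hB] at hmap
  have := Submodule.finrank_le U
  omega

end LinearMap.BilinForm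

def sympForm (n : ℕ) : LinearMap.BilinForm ℝ (PS n) :=
  LinearMap.mk₂ ℝ symp
    (fun _ _ _ => by simp only [symp, Pi.add_apply, add_mul, Finset.sum_add_distrib]; ring)
    (fun _ _ _ => by
      simp only [symp, Pi.smul_apply, smul_eq_mul, Finset.mul_sum, mul_sub, mul_assoc])
    (fun _ _ _ => by simp only [symp, Pi.add_apply, mul_add, Finset.sum_add_distrib]; ring)
    (fun _ _ _ => by
      simp only [symp, Pi.smul_apply, smul_eq_mul, Finset.mul_sum, mul_sub, mul_left_comm])

theorem sympForm_isAlt (n : ℕ) : (sympForm n).IsAlt := fun u => by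
  simp [sympForm, symp, mul_comm]

theorem sympForm_nondegenerate (n : ℕ) : (sympForm n).Nondegenerate := by
  refine (IsRefl.nondegenerate_iff_separatingLeft (sympForm_isAlt n).isRefl).mpr fun u hu => ?_
  funext i
  cases i with
  | inl i => simpa [sympForm, symp, Pi.single_apply] using hu (Pi.single (inr i) 1)
  | inr i => simpa [sympForm, symp, Pi.single_apply] using hu (Pi.single (inl i) 1)

theorem isSkewAdjoint_sympForm_mulVecLin {n : ℕ}
    {K : Matrix (Fin n ⊕ Fin n) (Fin n ⊕ Fin n) ℝ}
    (hK : ∀ u v : PS n, symp (K.mulVec u) v + symp u (K.mulVec v) = 0) :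
    IsSkewAdjoint (sympForm n) K.mulVecLin := fun u v => by
  change sympForm n (K.mulVec u) v = sympForm n u (-K.mulVec v)
  rw [map_neg, eq_neg_iff_add_eq_zero]
  exact hK u v

/-- for an infinitesimally symplectic `K` with `τ = ½ Tr K² ≠ 0`
annihilating an `(n−1)`-dimensional isotropic subspace `λ`, one has
`dim im K² = 2`, `dim ker K² = 2n−2`, and `ℝ^{2n} = ker K² ⊕ im K²` is a decomposition
into mutually skew-orthogonal symplectic subspaces. -/
theorem stmt10 {n : ℕ} (K : Matrix (Fin n ⊕ Fin n) (Fin n ⊕ Fin n) ℝ)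
    (hK : ∀ u v : PS n, symp (K.mulVec u) v + symp u (K.mulVec v) = 0)
    (hτ : (1 / 2 : ℝ) * (K * K).trace ≠ 0)
    (lam : Submodule ℝ (PS n))
    (hlamdim : Module.finrank ℝ lam = n - 1)
    (hiso : ∀ u ∈ lam, ∀ v ∈ lam, symp u v = 0)
    (hKlam : ∀ v ∈ lam, K.mulVec v = 0) :
    Module.finrank ℝ (LinearMap.range (K * K).mulVecLin) = 2 ∧
    Module.finrank ℝ (LinearMap.ker (K * K).mulVecLin) = 2 * n - 2 ∧
    IsCompl (LinearMap.ker (K * K).mulVecLin) (LinearMap.range (K * K).mulVecLin) ∧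
    (∀ u ∈ LinearMap.ker (K * K).mulVecLin,
      ∀ v ∈ LinearMap.range (K * K).mulVecLin, symp u v = 0) ∧
    (∀ u ∈ LinearMap.ker (K * K).mulVecLin,
      (∀ v ∈ LinearMap.ker (K * K).mulVecLin, symp u v = 0) → u = 0) ∧
    (∀ u ∈ LinearMap.range (K * K).mulVecLin,
      (∀ v ∈ LinearMap.range (K * K).mulVecLin, symp u v = 0) → u = 0) := by
  open LinearMap.BilinForm in
  have hB₁ := sympForm_isAlt n
  have hB := sympForm_nondegenerate n
  have hf := isSkewAdjoint_sympForm_mulVecLin hK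
  have hKK : (K * K).mulVecLin = K.mulVecLin * K.mulVecLin := Matrix.mulVecLin_mul K K
  have hL : IsAdjointPair (sympForm n) (sympForm n) (K * K).mulVecLin (K * K).mulVecLin :=
    hKK ▸ hf.isAdjointPair_mul_self
  have htr : trace ℝ _ (K * K).mulVecLin ≠ 0 := by
    rw [← Matrix.toLin'_apply', Matrix.trace_toLin'_eq]
    exact right_ne_zero_of_mul hτ
  have hdim : finrank ℝ (Fin n ⊕ Fin n → ℝ) = 2 * n := by simp [two_mul]
  have hrange : finrank ℝ (range (K * K).mulVecLin) = 2 := by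
    have hle : finrank ℝ (range (K * K).mulVecLin) + 2 * finrank ℝ lam ≤ 2 * n := by
      have := finrank_range_mul_self_add_two_mul_le hB hf hiso hKlam
      rwa [Module.End.mul_eq_comp, ← Matrix.mulVecLin_mul, hdim] at this
    have hge : 2 ≤ finrank ℝ (range (K * K).mulVecLin) :=
      hB₁.two_le_finrank_range_of_trace_ne_zero hB hL htr
    omega
  have hR := hB₁.restrict_range_nondegenerate_of_finrank_eq_two hB hL htr hrange
  refine ⟨hrange, ?_, isCompl_ker_range hB hB₁.isRefl hL hR,
    fun u hu v hv => apply_eq_zero_of_mem_ker_of_mem_range hL hu hv,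
    fun u hu =>
      eq_zero_of_restrict_nondegenerate (restrict_ker_nondegenerate hB hB₁.isRefl hL hR) hu,
    fun u hu => eq_zero_of_restrict_nondegenerate hR hu⟩
  have := finrank_range_add_finrank_ker (K * K).mulVecLin
  omega
end
end
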